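/- Suppose δ > 0 and 3 ≤ L < (64δ)^{−1/2}. Then χ(Γ) < ∞ almost surely. -/

import Mathlib

open scoped Classical

noncomputable section

/-- `α(C)`: the smallest element of a cluster. -/
def clAlpha (c : Finset ℕ) : ℕ := sInf (↑c : Set ℕ)

/-- `ω(C)`: the largest element of a cluster. -/
def clOmega (c : Finset ℕ) : ℕ := sSup (↑c : Set ℕ)

/-- Euclidean distance between two finite subsets of `ℤ₊`. -/
def clDist (a b : Finset ℕ) : ℕ :=
  sInf {d : ℕ | ∃ x ∈ a, ∃ y ∈ b, d = max x y - min x y}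

/-- A maximal `(k+1)`-run among a family `F` of clusters: at least two consecutive members
of `F`, successive ones at Euclidean distance `< L^(k+1)`, maximal in the sense that the
member of `F` immediately preceding (resp. following) the run, if any, is at distance
`≥ L^(k+1)`. -/
structure MaxRun (L k : ℕ) (F : Set (Finset ℕ)) where
  n : ℕ
  c : ℕ → Finset ℕ
  two_le : 2 ≤ n
  mem : ∀ i, i < n → c i ∈ F
  ordered : ∀ i, i + 1 < n → clOmega (c i) < clAlpha (c (i + 1))
  consecutive : ∀ i, i + 1 < n → ∀ b ∈ F,
    ¬(clOmega (c i) < clAlpha b ∧ clOmega b < clAlpha (c (i + 1)))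
  close : ∀ i, i + 1 < n → clDist (c i) (c (i + 1)) < L ^ (k + 1)
  max_below : ∀ b ∈ F, clOmega b < clAlpha (c 0) →
    (∀ b' ∈ F, ¬(clOmega b < clAlpha b' ∧ clOmega b' < clAlpha (c 0))) →
    L ^ (k + 1) ≤ clDist b (c 0)
  max_above : ∀ b ∈ F, clOmega (c (n - 1)) < clAlpha b →
    (∀ b' ∈ F, ¬(clOmega (c (n - 1)) < clAlpha b' ∧ clOmega b' < clAlpha b)) →
    L ^ (k + 1) ≤ clDist (c (n - 1)) b

/-- The span of a run: the smallest integer interval containing all of its constituents. -/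
def MaxRun.spanIcc {L k : ℕ} {F : Set (Finset ℕ)} (R : MaxRun L k F) : Finset ℕ :=
  Finset.Icc (clAlpha (R.c 0)) (clOmega (R.c (R.n - 1)))

/-- The cluster of level `k+1` produced by a maximal `(k+1)`-run: `span(run) ∩ Γ`. -/
def MaxRun.cluster {L k : ℕ} {F : Set (Finset ℕ)} (Γ : Set ℕ) (R : MaxRun L k F) : Finset ℕ :=
  R.spanIcc.filter (fun x => x ∈ Γ)

/-- The mass of the cluster produced by a run with constituent masses `m₁, …, m_n`:
`m₁ + ∑_{s=2}^n (m_s − k)`. -/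
def MaxRun.newMass {L k : ℕ} {F : Set (Finset ℕ)} (mass : Finset ℕ → ℕ) (R : MaxRun L k F) : ℕ :=
  mass (R.c 0) + ∑ i ∈ Finset.Ico 1 R.n, (mass (R.c i) - k)

/-- The recursive cluster hierarchy over the environment `Γ ⊆ ℤ₊` with parameter `L`:
`C 0` is the partition of `Γ` into singletons of mass one; `C (k+1)` consists of the
clusters produced by the maximal `(k+1)`-runs of clusters of `C k` of mass at least `k+1`,
together with the clusters of `C k` disjoint from the spans of all such runs. -/
structure ClusterHierarchy (L : ℕ) (Γ : Set ℕ) where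
  C : ℕ → Set (Finset ℕ)
  mass : Finset ℕ → ℕ
  C_zero : C 0 = {s | ∃ x ∈ Γ, s = {x}}
  mass_zero : ∀ x ∈ Γ, mass ({x} : Finset ℕ) = 1
  mem_succ : ∀ k c, c ∈ C (k + 1) ↔
    ((∃ R : MaxRun L k {b | b ∈ C k ∧ k + 1 ≤ mass b}, c = R.cluster Γ) ∨
     (c ∈ C k ∧ ∀ R : MaxRun L k {b | b ∈ C k ∧ k + 1 ≤ mass b},
        ∀ x ∈ c, x ∉ R.spanIcc))
  mass_succ : ∀ k (R : MaxRun L k {b | b ∈ C k ∧ k + 1 ≤ mass b}),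
    mass (R.cluster Γ) = R.newMass mass

namespace ClusterHierarchy

variable {L : ℕ} {Γ : Set ℕ}

/-- `c` is a cluster of the hierarchy. -/
def IsCluster (H : ClusterHierarchy L Γ) (c : Finset ℕ) : Prop := ∃ k, c ∈ H.C k

/-- The level `ℓ(C)` of a cluster: the smallest `k` with `C ∈ C_k`. -/
def level (H : ClusterHierarchy L Γ) (c : Finset ℕ) : ℕ := sInf {k | c ∈ H.C k}

/-- The set of levels of clusters containing `x`; `κ(x)` is its supremum. -/
def kappaSet (H : ClusterHierarchy L Γ) (x : ℕ) : Set ℕ :=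
  {ℓ | ∃ c, H.IsCluster c ∧ H.level c = ℓ ∧ x ∈ c}

/-- The limiting partition `C_∞`: the maximal clusters, i.e. clusters which are not met
by any cluster of strictly larger level. -/
def Cinf (H : ClusterHierarchy L Γ) : Set (Finset ℕ) :=
  {c | H.IsCluster c ∧
    ∀ c', H.IsCluster c' → (∃ x, x ∈ c ∧ x ∈ c') → H.level c' ≤ H.level c}

end ClusterHierarchy

end

/-!
Every cluster of mass `m` contains a skeleton: a chain of points of `Γ` from `α(C)` to `ω(C)`
whose gaps are bounded by `L ^ ℓ` for levels `ℓ` of total at most `2 · #gaps + 1 - m`. Gluing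
the constituents of a run one at a time by gaps of level `k + 1` preserves this budget, which is
exactly what the mass formula `m₁ + Σ (m_s - k)` allows. A union bound over chains starting
within distance `L ^ m` of the origin bounds the probability of such a skeleton by
`L δ (1 - 8 L² δ)⁻¹ 2^{-(m-1)}`: every point costs `δ`, and the budget turns the `L ^ ℓ` choices
of each gap into a convergent geometric series. These bounds are summable in `m`, so by
Borel–Cantelli only finitely many masses `m` have a cluster within distance `L ^ m` of `0`.
-/

open Finset MeasureTheory ProbabilityTheory Filter
open scoped ENNReal

theorem ENNReal.tsum_pi_fin_prod {α : Type*} (f : α → ℝ≥0∞) (n : ℕ) :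
    ∑' v : Fin n → α, ∏ i, f (v i) = (∑' a, f a) ^ n := by
  induction n with
  | zero => simp
  | succ n ih =>
    rw [← (Fin.consEquiv fun _ => α).tsum_eq, ENNReal.tsum_prod']
    simp [Fin.prod_univ_succ, ENNReal.tsum_mul_left, ENNReal.tsum_mul_right, ih, pow_succ']

theorem ENNReal.tsum_list_prod_map {α : Type*} (f : α → ℝ≥0∞) :
    ∑' l : List α, (l.map f).prod = (1 - ∑' a, f a)⁻¹ := by
  rw [← List.equivSigmaTuple.symm.tsum_eq, ENNReal.tsum_sigma']
  simp [List.map_ofFn, List.prod_ofFn, ENNReal.tsum_pi_fin_prod, ENNReal.tsum_geometric]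

lemma ENNReal.natCast_mul_inv_two_mul {L : ℕ} (hL : L ≠ 0) :
    (L : ℝ≥0∞) * (2 * (L : ℝ≥0∞))⁻¹ = 2⁻¹ := by
  rw [ENNReal.mul_inv (by simp) (by simp), mul_left_comm,
    ENNReal.mul_inv_cancel (by simpa using hL) (by simp), mul_one]

lemma mul_sq_lt_one_of_lt_inv_sqrt {x y : ℝ} (hx : 0 ≤ x) (h : x < (√y)⁻¹) : y * x ^ 2 < 1 := by
  rcases le_or_gt y 0 with hy | hy
  · nlinarith [sq_nonneg x]
  · have hsqrt : 0 < √y := Real.sqrt_pos.2 hy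
    have hlt : x * √y < 1 := by
      simpa [inv_mul_cancel₀ hsqrt.ne'] using mul_lt_mul_of_pos_right h hsqrt
    calc y * x ^ 2 = (x * √y) ^ 2 := by rw [mul_pow, Real.sq_sqrt hy.le]; ring
      _ < 1 := pow_lt_one₀ (by positivity) hlt two_ne_zero

lemma clAlpha_eq_min' {c : Finset ℕ} (hc : c.Nonempty) : clAlpha c = c.min' hc :=
  (c.isLeast_min' hc).csInf_eq

lemma clOmega_eq_max' {c : Finset ℕ} (hc : c.Nonempty) : clOmega c = c.max' hc :=
  (c.isGreatest_max' hc).csSup_eq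

lemma clAlpha_mem {c : Finset ℕ} (hc : c.Nonempty) : clAlpha c ∈ c := by
  rw [clAlpha_eq_min' hc]; exact c.min'_mem hc

lemma clOmega_mem {c : Finset ℕ} (hc : c.Nonempty) : clOmega c ∈ c := by
  rw [clOmega_eq_max' hc]; exact c.max'_mem hc

lemma clAlpha_le {c : Finset ℕ} {x : ℕ} (hx : x ∈ c) : clAlpha c ≤ x := by
  rw [clAlpha_eq_min' ⟨x, hx⟩]; exact c.min'_le x hx

lemma le_clOmega {c : Finset ℕ} {x : ℕ} (hx : x ∈ c) : x ≤ clOmega c := by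
  rw [clOmega_eq_max' ⟨x, hx⟩]; exact c.le_max' x hx

lemma clAlpha_le_clOmega {c : Finset ℕ} (hc : c.Nonempty) : clAlpha c ≤ clOmega c :=
  clAlpha_le (clOmega_mem hc)

lemma clDist_singleton_zero (c : Finset ℕ) : clDist c {0} = clAlpha c := by
  have : {d : ℕ | ∃ x ∈ c, ∃ y ∈ ({0} : Finset ℕ), d = max x y - min x y} = ↑c := by
    ext d; simp
  rw [clDist, this, clAlpha]

lemma sub_le_clDist {a b : Finset ℕ} (ha : a.Nonempty) (hb : b.Nonempty)
    (h : clOmega a < clAlpha b) : clAlpha b - clOmega a ≤ clDist a b := by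
  obtain ⟨x, hx, y, hy, hd⟩ : clDist a b ∈ {d | ∃ x ∈ a, ∃ y ∈ b, d = max x y - min x y} :=
    Nat.sInf_mem ⟨_, clOmega a, clOmega_mem ha, clAlpha b, clAlpha_mem hb, rfl⟩
  have := le_clOmega hx
  have := clAlpha_le hy
  omega

-- Chains are encoded by a start point and the list of their steps `(gap, level)`.
def chainPoints (a : ℕ) (l : List (ℕ × ℕ)) : List ℕ := l.scanl (fun x e => x + e.1) a

def chainEnd (a : ℕ) (l : List (ℕ × ℕ)) : ℕ := l.foldl (fun x e => x + e.1) a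

def levelSum (l : List (ℕ × ℕ)) : ℕ := (l.map Prod.snd).sum

def IsStep (L : ℕ) (e : ℕ × ℕ) : Prop := 1 ≤ e.1 ∧ e.1 ≤ L ^ e.2

def IsAdmissible (L m : ℕ) (l : List (ℕ × ℕ)) : Prop :=
  (∀ e ∈ l, IsStep L e) ∧ levelSum l + m ≤ 2 * l.length + 1

def HasSkeleton (L : ℕ) (Γ : Set ℕ) (m a b : ℕ) : Prop :=
  ∃ l, IsAdmissible L m l ∧ chainEnd a l = b ∧ ∀ x ∈ chainPoints a l, x ∈ Γ

lemma chainPoints_append_cons (a : ℕ) (l₁ : List (ℕ × ℕ)) (e : ℕ × ℕ) (l₂ : List (ℕ × ℕ)) :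
    chainPoints a (l₁ ++ e :: l₂) = chainPoints a l₁ ++ chainPoints (chainEnd a l₁ + e.1) l₂ := by
  simp [chainPoints, chainEnd, List.scanl_append]

lemma chainEnd_append_cons (a : ℕ) (l₁ : List (ℕ × ℕ)) (e : ℕ × ℕ) (l₂ : List (ℕ × ℕ)) :
    chainEnd a (l₁ ++ e :: l₂) = chainEnd (chainEnd a l₁ + e.1) l₂ := by
  simp [chainEnd]

lemma levelSum_append_cons (l₁ : List (ℕ × ℕ)) (e : ℕ × ℕ) (l₂ : List (ℕ × ℕ)) :
    levelSum (l₁ ++ e :: l₂) = levelSum l₁ + e.2 + levelSum l₂ := by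
  simp [levelSum]; ring

lemma le_of_mem_chainPoints {a x : ℕ} {l : List (ℕ × ℕ)} (hx : x ∈ chainPoints a l) : a ≤ x := by
  induction l generalizing a with
  | nil => simp_all [chainPoints]
  | cons e l ih =>
    simp only [chainPoints, List.scanl_cons, List.mem_cons] at hx
    rcases hx with rfl | hx
    exacts [le_rfl, (Nat.le_add_right a e.1).trans (ih hx)]

lemma chainPoints_pairwise_lt {l : List (ℕ × ℕ)} (hl : ∀ e ∈ l, 1 ≤ e.1) (a : ℕ) :
    (chainPoints a l).Pairwise (· < ·) := by
  induction l generalizing a with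
  | nil => simp [chainPoints]
  | cons e l ih =>
    have he := hl e (by simp)
    simp only [chainPoints, List.scanl_cons, List.pairwise_cons]
    exact ⟨fun x hx => by have := le_of_mem_chainPoints hx; omega,
      ih (fun e' he' => hl e' (by simp [he'])) _⟩

lemma card_toFinset_chainPoints {l : List (ℕ × ℕ)} (hl : ∀ e ∈ l, 1 ≤ e.1) (a : ℕ) :
    (chainPoints a l).toFinset.card = l.length + 1 := by
  rw [List.toFinset_card_of_nodup ((chainPoints_pairwise_lt hl a).imp ne_of_lt), chainPoints,
    List.length_scanl]

namespace HasSkeleton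

variable {L : ℕ} {Γ : Set ℕ}

lemma singleton {a : ℕ} (ha : a ∈ Γ) : HasSkeleton L Γ 1 a a :=
  ⟨[], ⟨by simp, by simp [levelSum]⟩, rfl, by simpa [chainPoints] using ha⟩

lemma join {m m' m'' a b a' b' j : ℕ} (h : HasSkeleton L Γ m a b) (h' : HasSkeleton L Γ m' a' b')
    (hlt : b < a') (hgap : a' - b ≤ L ^ j) (hm : m'' + j ≤ m + m' + 1) :
    HasSkeleton L Γ m'' a b' := by
  obtain ⟨l, ⟨hstep, hbudget⟩, rfl, hpts⟩ := h
  obtain ⟨l', ⟨hstep', hbudget'⟩, rfl, hpts'⟩ := h'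
  have hlink : chainEnd a l + (a' - chainEnd a l) = a' := by omega
  refine ⟨l ++ (a' - chainEnd a l, j) :: l', ⟨?_, ?_⟩, ?_, ?_⟩
  · simp only [List.mem_append, List.mem_cons]
    rintro e (he | rfl | he)
    exacts [hstep e he, ⟨by omega, hgap⟩, hstep' e he]
  · simp only [levelSum_append_cons, List.length_append, List.length_cons]
    omega
  · rw [chainEnd_append_cons, hlink]
  · simp only [chainPoints_append_cons, hlink, List.mem_append]
    rintro x (hx | hx)
    exacts [hpts x hx, hpts' x hx]

end HasSkeleton

def CarriesSkeleton (L : ℕ) (Γ : Set ℕ) (m : ℕ) (c : Finset ℕ) : Prop :=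
  c.Nonempty ∧ ↑c ⊆ Γ ∧ HasSkeleton L Γ m (clAlpha c) (clOmega c)

namespace MaxRun

variable {L k : ℕ} {Γ : Set ℕ} {F : Set (Finset ℕ)} (R : MaxRun L k F)

lemma clAlpha_le_clOmega (hF : ∀ b ∈ F, b.Nonempty) {j : ℕ} (hj : j < R.n) :
    clAlpha (R.c 0) ≤ clOmega (R.c j) := by
  induction j with
  | zero => exact _root_.clAlpha_le_clOmega (hF _ (R.mem 0 hj))
  | succ j ih =>
    have := R.ordered j hj
    have := _root_.clAlpha_le_clOmega (hF _ (R.mem _ hj))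
    have := ih (by omega)
    omega

lemma mem_cluster {x : ℕ} :
    x ∈ R.cluster Γ ↔ (clAlpha (R.c 0) ≤ x ∧ x ≤ clOmega (R.c (R.n - 1))) ∧ x ∈ Γ := by
  simp [cluster, spanIcc]

lemma isLeast_cluster (hF : ∀ b ∈ F, b.Nonempty ∧ ↑b ⊆ Γ) :
    IsLeast ↑(R.cluster Γ) (clAlpha (R.c 0)) := by
  have h0 := R.mem 0 (by have := R.two_le; omega)
  refine ⟨R.mem_cluster.2 ⟨⟨le_rfl, ?_⟩, (hF _ h0).2 (clAlpha_mem (hF _ h0).1)⟩,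
    fun x hx => (R.mem_cluster.1 hx).1.1⟩
  exact R.clAlpha_le_clOmega (fun b hb => (hF b hb).1) (by have := R.two_le; omega)

lemma isGreatest_cluster (hF : ∀ b ∈ F, b.Nonempty ∧ ↑b ⊆ Γ) :
    IsGreatest ↑(R.cluster Γ) (clOmega (R.c (R.n - 1))) := by
  have hlast := R.mem (R.n - 1) (by have := R.two_le; omega)
  refine ⟨R.mem_cluster.2 ⟨⟨?_, le_rfl⟩, (hF _ hlast).2 (clOmega_mem (hF _ hlast).1)⟩,
    fun x hx => (R.mem_cluster.1 hx).1.2⟩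
  exact R.clAlpha_le_clOmega (fun b hb => (hF b hb).1) (by have := R.two_le; omega)

lemma hasSkeleton_prefix (mass : Finset ℕ → ℕ)
    (hF : ∀ b ∈ F, CarriesSkeleton L Γ (mass b) b ∧ k + 1 ≤ mass b) {j : ℕ} (hj : j < R.n) :
    HasSkeleton L Γ (mass (R.c 0) + ∑ i ∈ Ico 1 (j + 1), (mass (R.c i) - k))
      (clAlpha (R.c 0)) (clOmega (R.c j)) := by
  induction j with
  | zero => simpa using (hF _ (R.mem 0 hj)).1.2.2
  | succ j ih =>
    obtain ⟨⟨hne, -, hskel⟩, hmass⟩ := hF _ (R.mem _ hj)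
    have hord := R.ordered j hj
    have hgap := sub_le_clDist (hF _ (R.mem j (by omega))).1.1 hne hord
    have hclose := R.close j hj
    rw [sum_Ico_succ_top (by omega)]
    exact (ih (by omega)).join hskel hord (j := k + 1) (by omega) (by omega)

lemma carriesSkeleton_cluster (mass : Finset ℕ → ℕ)
    (hF : ∀ b ∈ F, CarriesSkeleton L Γ (mass b) b ∧ k + 1 ≤ mass b) :
    CarriesSkeleton L Γ (R.newMass mass) (R.cluster Γ) := by
  have hF' : ∀ b ∈ F, b.Nonempty ∧ ↑b ⊆ Γ := fun b hb => ⟨(hF b hb).1.1, (hF b hb).1.2.1⟩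
  have hn : R.n - 1 + 1 = R.n := by have := R.two_le; omega
  refine ⟨⟨_, (R.isLeast_cluster hF').1⟩, fun x hx => (R.mem_cluster.1 hx).2, ?_⟩
  rw [clAlpha, clOmega, (R.isLeast_cluster hF').csInf_eq, (R.isGreatest_cluster hF').csSup_eq,
    newMass]
  simpa [hn] using R.hasSkeleton_prefix mass hF (j := R.n - 1) (by omega)

end MaxRun

lemma ClusterHierarchy.carriesSkeleton {L : ℕ} {Γ : Set ℕ} (H : ClusterHierarchy L Γ)
    {k : ℕ} {c : Finset ℕ} (hc : c ∈ H.C k) : CarriesSkeleton L Γ (H.mass c) c := by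
  induction k generalizing c with
  | zero =>
    rw [H.C_zero] at hc
    obtain ⟨x, hx, rfl⟩ := hc
    have hα : clAlpha {x} = x := by simp [clAlpha_eq_min']
    have hω : clOmega {x} = x := by simp [clOmega_eq_max']
    refine ⟨singleton_nonempty x, by simpa using hx, ?_⟩
    rw [hα, hω, H.mass_zero x hx]
    exact .singleton hx
  | succ k ih =>
    rcases (H.mem_succ k c).1 hc with ⟨R, rfl⟩ | ⟨hc, -⟩
    · rw [H.mass_succ]
      exact R.carriesSkeleton_cluster H.mass fun b hb => ⟨ih hb.1, hb.2⟩
    · exact ih hc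

section Probability

variable {Ω : Type*} [MeasurableSpace Ω]

lemma measure_forall_mem_eq_pow {ι : Type*} {μ : Measure Ω} {ξ : ι → Ω → Bool}
    (hindep : iIndepFun ξ μ) {ε : ℝ≥0∞} (hlaw : ∀ i, μ {ω | ξ i ω = true} = ε) (s : Finset ι) :
    μ {ω | ∀ i ∈ s, ξ i ω = true} = ε ^ s.card := by
  have : {ω | ∀ i ∈ s, ξ i ω = true} = ⋂ i ∈ s, {ω | ξ i ω = true} := by ext; simp
  rw [this, hindep.meas_biInter (s := fun i => {ω | ξ i ω = true})
    fun i _ => ⟨{true}, measurableSet_singleton true, rfl⟩]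
  simp [hlaw]

def badEvent (L : ℕ) (ξ : ℕ → Ω → Bool) (m : ℕ) : Set Ω :=
  {ω | ∃ a < L ^ m, ∃ b, HasSkeleton L {x | ξ x ω = true} m a b}

-- Per step, `(2L)² ε` pays for the new point and for the two units of budget the step brings;
-- summed over the `L ^ level` gaps of a level, `(2L)⁻¹ ^ level` leaves `2⁻¹ ^ level`.
noncomputable def stepWeight (L : ℕ) (ε : ℝ≥0∞) (e : ℕ × ℕ) : ℝ≥0∞ :=
  if IsStep L e then 4 * L ^ 2 * ε * (2 * (L : ℝ≥0∞))⁻¹ ^ e.2 else 0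

lemma tsum_stepWeight {L : ℕ} (hL : L ≠ 0) (ε : ℝ≥0∞) :
    ∑' e, stepWeight L ε e = 8 * L ^ 2 * ε := by
  have hlevel : ∀ j, ∑' g, stepWeight L ε (g, j) = 4 * L ^ 2 * ε * 2⁻¹ ^ j := by
    intro j
    have hW : ∀ g, stepWeight L ε (g, j)
        = if g ∈ Icc 1 (L ^ j) then 4 * L ^ 2 * ε * (2 * (L : ℝ≥0∞))⁻¹ ^ j else 0 := by
      intro g; simp only [stepWeight, IsStep, mem_Icc]; congr
    rw [tsum_congr hW, tsum_eq_sum fun g hg => if_neg hg, sum_ite_mem, inter_self, sum_const,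
      Nat.card_Icc, Nat.add_sub_cancel, nsmul_eq_mul, ← ENNReal.natCast_mul_inv_two_mul hL,
      mul_pow]
    push_cast
    ring
  rw [ENNReal.tsum_prod', ENNReal.tsum_comm, tsum_congr hlevel, ENNReal.tsum_mul_left,
    ENNReal.tsum_geometric, ENNReal.one_sub_inv_two, inv_inv]
  ring

lemma prod_map_stepWeight {L : ℕ} (ε : ℝ≥0∞) {l : List (ℕ × ℕ)} (hl : ∀ e ∈ l, IsStep L e) :
    (l.map (stepWeight L ε)).prod
      = (4 * L ^ 2 * ε) ^ l.length * (2 * (L : ℝ≥0∞))⁻¹ ^ levelSum l := by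
  induction l with
  | nil => simp [levelSum]
  | cons e l ih =>
    simp only [List.map_cons, List.prod_cons, stepWeight, if_pos (hl e (by simp)),
      ih fun e' he' => hl e' (by simp [he']), List.length_cons, levelSum, List.sum_cons]
    ring

lemma pow_le_mul_prod_stepWeight {L M : ℕ} (hL : L ≠ 0) (ε : ℝ≥0∞) {l : List (ℕ × ℕ)}
    (hl : IsAdmissible L (M + 1) l) :
    ε ^ (l.length + 1) ≤ ε * (2 * (L : ℝ≥0∞))⁻¹ ^ M * (l.map (stepWeight L ε)).prod := by
  obtain ⟨hstep, hbudget⟩ := hl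
  obtain ⟨d, hd⟩ : ∃ d, 2 * l.length = levelSum l + M + d :=
    ⟨2 * l.length - (levelSum l + M), by omega⟩
  have ht1 : 1 ≤ 2 * (L : ℝ≥0∞) :=
    one_le_two.trans (le_mul_of_one_le_right' (by simpa [Nat.one_le_iff_ne_zero] using hL))
  have ht : 2 * (L : ℝ≥0∞) * (2 * (L : ℝ≥0∞))⁻¹ = 1 :=
    ENNReal.mul_inv_cancel (by simpa using hL) (ENNReal.mul_ne_top (by simp) (by simp))
  rw [prod_map_stepWeight ε hstep, show (4 * L ^ 2 : ℝ≥0∞) = (2 * L) ^ 2 by ring]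
  generalize 2 * (L : ℝ≥0∞) = t at ht ht1 ⊢
  calc ε ^ (l.length + 1) ≤ ε ^ (l.length + 1) * t ^ d :=
        le_mul_of_one_le_right' (one_le_pow₀ ht1)
    _ = ε ^ (l.length + 1) * t ^ d * (t * t⁻¹) ^ (levelSum l + M) := by
      rw [ht, one_pow, mul_one]
    _ = ε * t⁻¹ ^ M * ((t ^ 2 * ε) ^ l.length * t⁻¹ ^ levelSum l) := by
      rw [mul_pow (t ^ 2), ← pow_mul, hd]; ring

lemma measure_badEvent_le {μ : Measure Ω} {ξ : ℕ → Ω → Bool} (hindep : iIndepFun ξ μ)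
    {ε : ℝ≥0∞} (hlaw : ∀ i, μ {ω | ξ i ω = true} = ε) {L : ℕ} (hL : L ≠ 0) (M : ℕ) :
    μ (badEvent L ξ (M + 1)) ≤ L * ε * (1 - 8 * L ^ 2 * ε)⁻¹ * 2⁻¹ ^ M := by
  set A := {l | IsAdmissible L (M + 1) l}
  set E : ℕ → List (ℕ × ℕ) → Set Ω := fun a l =>
    {ω | ∀ x ∈ (chainPoints a l).toFinset, ξ x ω = true}
  set w : List (ℕ × ℕ) → ℝ≥0∞ := fun l =>
    ε * (2 * (L : ℝ≥0∞))⁻¹ ^ M * (l.map (stepWeight L ε)).prod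
  have hsub : badEvent L ξ (M + 1) ⊆ ⋃ a ∈ range (L ^ (M + 1)), ⋃ l ∈ A, E a l := by
    rintro ω ⟨a, ha, b, l, hl, -, hpts⟩
    simp only [Set.mem_iUnion]
    exact ⟨a, by simpa using ha, l, hl, by simpa [E] using hpts⟩
  have hE : ∀ a, ∀ l ∈ A, μ (E a l) ≤ w l := by
    intro a l hl
    rw [measure_forall_mem_eq_pow hindep hlaw,
      card_toFinset_chainPoints fun e he => (hl.1 e he).1]
    exact pow_le_mul_prod_stepWeight hL ε hl
  calc μ (badEvent L ξ (M + 1)) ≤ ∑ a ∈ range (L ^ (M + 1)), ∑' l : A, μ (E a l) :=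
        (measure_mono hsub).trans ((measure_biUnion_finset_le _ _).trans
          (sum_le_sum fun a _ => measure_biUnion_le μ A.to_countable _))
    _ ≤ ∑ a ∈ range (L ^ (M + 1)), ∑' l, w l :=
      sum_le_sum fun a _ => (ENNReal.tsum_le_tsum fun l : A => hE a l l.2).trans
        (ENNReal.tsum_comp_le_tsum_of_injective Subtype.val_injective w)
    _ = L * ε * (1 - 8 * L ^ 2 * ε)⁻¹ * 2⁻¹ ^ M := by
      rw [ENNReal.tsum_mul_left, ENNReal.tsum_list_prod_map, tsum_stepWeight hL, sum_const,
        card_range, nsmul_eq_mul, Nat.cast_pow]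
      simp only [← ENNReal.natCast_mul_inv_two_mul hL, mul_pow]
      ring

lemma ae_eventually_notMem_badEvent {μ : Measure Ω} {ξ : ℕ → Ω → Bool}
    (hindep : iIndepFun ξ μ) {ε : ℝ≥0∞} (hlaw : ∀ i, μ {ω | ξ i ω = true} = ε) {L : ℕ}
    (hL : L ≠ 0) (hε : 8 * L ^ 2 * ε < 1) :
    ∀ᵐ ω ∂μ, ∀ᶠ M in atTop, ω ∉ badEvent L ξ (M + 1) := by
  have hε_ne_top : ε ≠ ∞ := by rintro rfl; simp [hL] at hε
  refine ae_eventually_notMem (ne_top_of_le_ne_top ?_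
    (ENNReal.tsum_le_tsum (measure_badEvent_le hindep hlaw hL)))
  rw [ENNReal.tsum_mul_left, ENNReal.tsum_geometric, ENNReal.one_sub_inv_two, inv_inv]
  exact ENNReal.mul_ne_top (ENNReal.mul_ne_top (ENNReal.mul_ne_top (by simp) hε_ne_top)
    (ENNReal.inv_ne_top.2 (tsub_pos_of_lt hε).ne')) (by simp)

end Probability

lemma ClusterHierarchy.mem_badEvent {Ω : Type*} {ξ : ℕ → Ω → Bool} {ω : Ω} {L : ℕ}
    (H : ClusterHierarchy L {x | ξ x ω = true}) {k : ℕ} {c : Finset ℕ} (hc : c ∈ H.C k)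
    (hclose : clDist c {0} < L ^ H.mass c) : ω ∈ badEvent L ξ (H.mass c) :=
  ⟨clAlpha c, by rwa [clDist_singleton_zero] at hclose, _, (H.carriesSkeleton hc).2.2⟩

theorem chi_finite_as_general (δ : ℝ) (L : ℕ) (hL3 : 3 ≤ L)
    (hLδ : (L : ℝ) < (Real.sqrt (64 * δ))⁻¹)
    {Ω : Type} [MeasurableSpace Ω] (μ : Measure Ω)
    (ξ : ℕ → Ω → Bool)
    (hindep : iIndepFun ξ μ)
    (hlaw : ∀ i, μ {ω | ξ i ω = true} = ENNReal.ofReal δ) :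
    ∀ᵐ ω ∂μ, ∀ H : ClusterHierarchy L {x | ξ x ω = true},
      ∃ k : ℕ, ∀ c ∈ H.Cinf, k < H.mass c → L ^ H.mass c ≤ clDist c {0} := by
  have hL : L ≠ 0 := by omega
  have hδ : 8 * L ^ 2 * δ < 1 := by
    linarith [mul_sq_lt_one_of_lt_inv_sqrt (Nat.cast_nonneg L) hLδ]
  have hε : 8 * (L : ℝ≥0∞) ^ 2 * ENNReal.ofReal δ < 1 := by
    rw [← ENNReal.ofReal_natCast, ← ENNReal.ofReal_pow (by positivity), ← ENNReal.ofReal_ofNat,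
      ← ENNReal.ofReal_mul (by norm_num), ← ENNReal.ofReal_mul (by positivity)]
    exact ENNReal.ofReal_lt_one.2 hδ
  filter_upwards [ae_eventually_notMem_badEvent hindep hlaw hL hε] with ω hω H
  obtain ⟨N, hN⟩ := eventually_atTop.1 hω
  refine ⟨N, fun c ⟨⟨k, hc⟩, _⟩ hmass => ?_⟩
  by_contra! hclose
  obtain ⟨M, hM⟩ : ∃ M, H.mass c = M + 1 := ⟨H.mass c - 1, by omega⟩
  exact hN M (by omega) (hM ▸ H.mem_badEvent hc hclose)

/-- If `δ > 0` and `3 ≤ L < (64δ)^{-1/2}`, then `χ(Γ) < ∞` almost surely: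
there is some `k` such that every cluster `C ∈ C_∞` with `m(C) > k` satisfies
`d(C, 0) ≥ L^{m(C)}`. -/
theorem chi_finite_as (δ : ℝ) (L : ℕ) (hδ : 0 < δ) (hL3 : 3 ≤ L)
    (hLδ : (L : ℝ) < (Real.sqrt (64 * δ))⁻¹)
    {Ω : Type} [MeasurableSpace Ω] (μ : Measure Ω) [IsProbabilityMeasure μ]
    (ξ : ℕ → Ω → Bool) (hmeas : ∀ i, Measurable (ξ i))
    (hindep : iIndepFun ξ μ)
    (hlaw : ∀ i, μ {ω | ξ i ω = true} = ENNReal.ofReal δ) :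
    ∀ᵐ ω ∂μ, ∀ H : ClusterHierarchy L {x | ξ x ω = true},
      ∃ k : ℕ, ∀ c ∈ H.Cinf, k < H.mass c → L ^ H.mass c ≤ clDist c {0} :=
  chi_finite_as_general δ L hL3 hLδ μ ξ hindep hlaw
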